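/- arXiv:2307.06269 — 2 statements merged into one kernel-verified Lean document; each statement's English description precedes it below -/
import Mathlib

section
/- (Sensitivity decomposition under violation of monotonicity, after Angrist and Imbens.) Do NOT assume monotonicity. Assume unconfoundedness and positivity, that P(A1 > A0) > 0 and P(A1 < A0) > 0, and that Δ0 := E[ℓ1(X) − ℓ0(X)] ≠ 0. Let χ0 := Γ0/Δ0 with Γ0 := E[m1(X) − m0(X)], let δ1 := P(A1 < A0) and δ2 := E[Y1 − Y0 | A1 < A0] − E[Y1 − Y0 | A1 > A0]. Then E[Y1 − Y0 | A1 > A0] = χ0 + δ1·δ2/Δ0. -/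
/-!
Unconfoundedness and positivity identify each instrument arm by inverse propensity weighting:
if `l(X)` is a version of `E[T | X, Z = z]` and `T = φ_z(V)` on `{Z = z}`, then
`E[l(X)] = E[l(X) 1{Z = z} / P(Z = z | X)] = E[φ_z(V) 1{Z = z} / P(Z = z | X)] = E[φ_z(V)]`.
Since a version is only tested against bounded functions of `X`, one first shows that
`|l(X)| ≤ sup |T|` almost surely, which again uses positivity. For the treatment and the outcome
this gives `Δ0 = P(C) - P(D)` and `Γ0 = E[Y1 - Y0; C] - E[Y1 - Y0; D]` for compliers `C` and
defiers `D`, because `A1 - A0 = 1_C - 1_D`; the decomposition is then algebra.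
-/

open MeasureTheory ProbabilityTheory

theorem abs_le_one_of_eq_zero_or_eq_one {a : ℝ} (ha : a = 0 ∨ a = 1) : |a| ≤ 1 := by
  rcases ha with rfl | rfl <;> simp

theorem abs_one_sub_mul_add_mul_le {a : ℝ} (ha : a = 0 ∨ a = 1) (y₀ y₁ : ℝ) :
    |(1 - a) * y₀ + a * y₁| ≤ |y₀| + |y₁| := by
  rcases ha with rfl | rfl <;> simp

theorem div_eq_div_sub_add_mul_div_sub {a b p q : ℝ} (hp : p ≠ 0) (hq : q ≠ 0)
    (hpq : p - q ≠ 0) : a / p = (a - b) / (p - q) + q * (b / q - a / p) / (p - q) := by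
  field_simp
  ring

section

variable {Ω S : Type*} [MeasurableSpace Ω] [MeasurableSpace S]

/-- The weak form of `E[U | X] = E[V | X]`: equal integrals against every bounded `g ∘ X`. -/
def SameCondExp (P : Measure Ω) (X : Ω → S) (U V : Ω → ℝ) : Prop :=
  ∀ g : S → ℝ, Measurable g → (∃ C, ∀ x, |g x| ≤ C) →
    ∫ ω, U ω * g (X ω) ∂P = ∫ ω, V ω * g (X ω) ∂P

variable {P : Measure Ω} {X : Ω → S} {U V U₁ U₂ V₁ V₂ : Ω → ℝ}

theorem integrable_of_abs_le [IsFiniteMeasure P] {f : Ω → ℝ} (hf : Measurable f) {C : ℝ}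
    (hC : ∀ ω, |f ω| ≤ C) : Integrable f P :=
  .of_bound hf.aestronglyMeasurable C (ae_of_all _ hC)

theorem SameCondExp.neg (h : SameCondExp P X U V) :
    SameCondExp P X (fun ω => -U ω) (fun ω => -V ω) := by
  intro g hg hgb
  simp only [neg_mul, integral_neg, h g hg hgb]

theorem SameCondExp.sub [IsFiniteMeasure P] (hX : Measurable X) (h₁ : SameCondExp P X U₁ V₁)
    (h₂ : SameCondExp P X U₂ V₂) (hU₁ : Integrable U₁ P) (hU₂ : Integrable U₂ P)
    (hV₁ : Integrable V₁ P) (hV₂ : Integrable V₂ P) :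
    SameCondExp P X (fun ω => U₁ ω - U₂ ω) (fun ω => V₁ ω - V₂ ω) := by
  rintro g hg ⟨C, hC⟩
  have hgX : AEStronglyMeasurable (fun ω => g (X ω)) P := (hg.comp hX).aestronglyMeasurable
  have hbd : ∀ᵐ ω ∂P, ‖g (X ω)‖ ≤ C := ae_of_all _ fun ω => hC (X ω)
  simp only [sub_mul]
  rw [integral_sub (hU₁.mul_bdd hgX hbd) (hU₂.mul_bdd hgX hbd),
    integral_sub (hV₁.mul_bdd hgX hbd) (hV₂.mul_bdd hgX hbd), h₁ g hg ⟨C, hC⟩, h₂ g hg ⟨C, hC⟩]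

theorem SameCondExp.one_sub_mul [IsFiniteMeasure P] (hX : Measurable X) {W B : Ω → ℝ}
    {w : S → ℝ} (h : SameCondExp P X (fun ω => W ω * B ω) (fun ω => w (X ω) * B ω))
    (hB : Integrable B P) (hWB : Integrable (fun ω => W ω * B ω) P)
    (hwB : Integrable (fun ω => w (X ω) * B ω) P) :
    SameCondExp P X (fun ω => (1 - W ω) * B ω) (fun ω => (1 - w (X ω)) * B ω) := by
  have := SameCondExp.sub hX (fun _ _ _ => rfl) h hB hWB hB hwB
  convert this using 1 <;> ext ω <;> ring

structure IsPropensity (P : Measure Ω) (X : Ω → S) (W : Ω → ℝ) (w : S → ℝ) : Prop where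
  measurable_weight : Measurable W
  weight_nonneg : ∀ ω, 0 ≤ W ω
  weight_le_one : ∀ ω, W ω ≤ 1
  measurable : Measurable w
  pos : ∀ x, 0 < w x
  le_one : ∀ x, w x ≤ 1
  sameCondExp : SameCondExp P X W (fun ω => w (X ω))

def Unconfounded {E : Type*} [MeasurableSpace E] (P : Measure Ω) (X : Ω → S) (W : Ω → ℝ)
    (w : S → ℝ) (V : Ω → E) : Prop :=
  ∀ ψ : E → ℝ, Measurable ψ → (∃ C, ∀ v, |ψ v| ≤ C) →
    SameCondExp P X (fun ω => W ω * ψ (V ω)) (fun ω => w (X ω) * ψ (V ω))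

namespace IsPropensity

variable {W : Ω → ℝ} {w : S → ℝ}

theorem norm_weight_le_one (h : IsPropensity P X W w) (ω : Ω) : ‖W ω‖ ≤ 1 := by
  rw [Real.norm_eq_abs, abs_of_nonneg (h.weight_nonneg ω)]
  exact h.weight_le_one ω

theorem norm_le_one (h : IsPropensity P X W w) (x : S) : ‖w x‖ ≤ 1 := by
  rw [Real.norm_eq_abs, abs_of_pos (h.pos x)]
  exact h.le_one x

variable [IsFiniteMeasure P]

theorem one_sub (hX : Measurable X) (h : IsPropensity P X W w) (hw : ∀ x, 0 < 1 - w x) :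
    IsPropensity P X (fun ω => 1 - W ω) (fun x => 1 - w x) where
  measurable_weight := measurable_const.sub h.measurable_weight
  weight_nonneg ω := sub_nonneg.2 (h.weight_le_one ω)
  weight_le_one ω := sub_le_self _ (h.weight_nonneg ω)
  measurable := measurable_const.sub h.measurable
  pos := hw
  le_one x := sub_le_self _ (h.pos x).le
  sameCondExp := SameCondExp.sub hX (fun _ _ _ => rfl) h.sameCondExp (integrable_const 1)
    (.of_bound h.measurable_weight.aestronglyMeasurable 1 (ae_of_all _ h.norm_weight_le_one))
    (integrable_const 1)
    (.of_bound (h.measurable.comp hX).aestronglyMeasurable 1 (ae_of_all _ fun _ => h.norm_le_one _))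

theorem unconfounded_one_sub {E : Type*} [MeasurableSpace E] (hX : Measurable X)
    (h : IsPropensity P X W w) {V : Ω → E} (hV : Measurable V) (hU : Unconfounded P X W w V) :
    Unconfounded P X (fun ω => 1 - W ω) (fun x => 1 - w x) V := by
  rintro ψ hψ ⟨C, hC⟩
  have hψV : Integrable (fun ω => ψ (V ω)) P := integrable_of_abs_le (hψ.comp hV) fun ω => hC _
  exact (hU ψ hψ ⟨C, hC⟩).one_sub_mul hX hψV
    (hψV.bdd_mul h.measurable_weight.aestronglyMeasurable (ae_of_all _ h.norm_weight_le_one))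
    (hψV.bdd_mul (h.measurable.comp hX).aestronglyMeasurable
      (ae_of_all _ fun _ => h.norm_le_one _))

theorem ae_notMem_of_ae_mul_indicator_eq_zero (hX : Measurable X) (h : IsPropensity P X W w)
    {s : Set S} (hs : MeasurableSet s) (h0 : ∀ᵐ ω ∂P, W ω * s.indicator 1 (X ω) = 0) :
    ∀ᵐ ω ∂P, X ω ∉ s := by
  have hwX : Integrable (fun ω => w (X ω) * s.indicator 1 (X ω)) P :=
    Integrable.of_bound ((h.measurable.comp hX).mul
      ((measurable_one.indicator hs).comp hX)).aestronglyMeasurable 1 (ae_of_all _ fun ω => by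
        by_cases hω : X ω ∈ s <;>
          simp [hω, abs_of_pos (h.pos _), h.le_one])
  have hint : ∫ ω, w (X ω) * s.indicator 1 (X ω) ∂P = 0 := by
    rw [← h.sameCondExp _ (measurable_one.indicator hs) ⟨1, fun x => by
      by_cases hx : x ∈ s <;> simp [hx]⟩, integral_eq_zero_of_ae h0]
  have hnonneg : 0 ≤ fun ω => w (X ω) * s.indicator 1 (X ω) := fun ω =>
    mul_nonneg (h.pos _).le (Set.indicator_nonneg (fun _ _ => zero_le_one) _)
  rw [integral_eq_zero_iff_of_nonneg hnonneg hwX] at hint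
  filter_upwards [hint] with ω hω hmem
  simp [hmem, (h.pos (X ω)).ne'] at hω

theorem ae_notMem_of_lt (hX : Measurable X) (h : IsPropensity P X W w) {B : Ω → ℝ}
    (hB : Integrable B P) {C : ℝ} (hBC : ∀ ω, B ω ≤ C) {l : S → ℝ} (hl : Measurable l)
    (hBl : SameCondExp P X (fun ω => B ω * W ω) (fun ω => l (X ω) * W ω))
    {s : Set S} (hs : MeasurableSet s) (hlt : ∀ x ∈ s, C < l x) {D : ℝ}
    (hD : ∀ x ∈ s, |l x| ≤ D) :
    ∀ᵐ ω ∂P, X ω ∉ s := by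
  -- `(l(X) - B) W 1_s(X)` is nonnegative with integral zero, so `W` vanishes on `X⁻¹' s`.
  refine h.ae_notMem_of_ae_mul_indicator_eq_zero hX hs ?_
  have hind : ∀ x, |s.indicator (1 : S → ℝ) x| ≤ 1 := fun x => by
    by_cases hx : x ∈ s <;> simp [hx]
  have hBi : Integrable (fun ω => B ω * W ω * s.indicator 1 (X ω)) P :=
    (hB.mul_bdd h.measurable_weight.aestronglyMeasurable (ae_of_all _ h.norm_weight_le_one)).mul_bdd
      ((measurable_one.indicator hs).comp hX).aestronglyMeasurable (ae_of_all _ fun ω => hind _)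
  have hli : Integrable (fun ω => l (X ω) * W ω * s.indicator 1 (X ω)) P := by
    refine Integrable.of_bound (((hl.comp hX).mul h.measurable_weight).mul
      ((measurable_one.indicator hs).comp hX)).aestronglyMeasurable |D|
      (ae_of_all _ fun ω => ?_)
    by_cases hmem : X ω ∈ s
    · simp only [Set.indicator_of_mem hmem, Pi.one_apply, mul_one, Real.norm_eq_abs,
        abs_mul, abs_of_nonneg (h.weight_nonneg ω)]
      nlinarith [h.weight_nonneg ω, h.weight_le_one ω, abs_nonneg (l (X ω)),
        (hD _ hmem).trans (le_abs_self D)]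
    · simp [hmem]
  have hzero : ∫ ω, (l (X ω) - B ω) * W ω * s.indicator 1 (X ω) ∂P = 0 := by
    simp only [sub_mul]
    rw [integral_sub hli hBi, ← hBl _ (measurable_one.indicator hs) ⟨1, hind⟩, sub_self]
  have hnonneg : 0 ≤ fun ω => (l (X ω) - B ω) * W ω * s.indicator 1 (X ω) := fun ω => by
    by_cases hmem : X ω ∈ s
    · simp only [Set.indicator_of_mem hmem, Pi.one_apply, mul_one, Pi.zero_apply]
      exact mul_nonneg (by linarith [hlt _ hmem, hBC ω]) (h.weight_nonneg ω)
    · simp [hmem]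
  have hint : Integrable (fun ω => (l (X ω) - B ω) * W ω * s.indicator 1 (X ω)) P := by
    simp only [sub_mul]
    exact hli.sub hBi
  rw [integral_eq_zero_iff_of_nonneg hnonneg hint] at hzero
  filter_upwards [hzero] with ω hω
  by_cases hmem : X ω ∈ s
  · have hpos : 0 < l (X ω) - B ω := by linarith [hlt _ hmem, hBC ω]
    simpa [hmem, hpos.ne'] using hω
  · simp [hmem]

theorem ae_comp_le (hX : Measurable X) (h : IsPropensity P X W w) {B : Ω → ℝ}
    (hB : Integrable B P) {C : ℝ} (hBC : ∀ ω, B ω ≤ C) {l : S → ℝ} (hl : Measurable l)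
    (hBl : SameCondExp P X (fun ω => B ω * W ω) (fun ω => l (X ω) * W ω)) :
    ∀ᵐ ω ∂P, l (X ω) ≤ C := by
  -- `l(X)` is not known to be integrable, so it is cut to the sets `{C < l ≤ n}`.
  have hn : ∀ n : ℕ, ∀ᵐ ω ∂P, X ω ∉ {x | C < l x ∧ l x ≤ n} := fun n =>
    h.ae_notMem_of_lt hX hB hBC hl hBl
      ((measurableSet_lt measurable_const hl).inter (measurableSet_le hl measurable_const))
      (fun x hx => hx.1) (D := |C| + n) fun x hx =>
        abs_le.2 ⟨by linarith [neg_abs_le C, hx.1], by linarith [abs_nonneg C, hx.2]⟩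
  filter_upwards [ae_all_iff.2 hn] with ω hω
  by_contra hlt
  exact hω ⌈l (X ω)⌉₊ ⟨not_le.1 hlt, Nat.le_ceil _⟩

theorem ae_abs_comp_le (hX : Measurable X) (h : IsPropensity P X W w) {B : Ω → ℝ}
    (hB : Integrable B P) {C : ℝ} (hBC : ∀ ω, |B ω| ≤ C) {l : S → ℝ} (hl : Measurable l)
    (hBl : SameCondExp P X (fun ω => B ω * W ω) (fun ω => l (X ω) * W ω)) :
    ∀ᵐ ω ∂P, |l (X ω)| ≤ C := by
  have hup := h.ae_comp_le hX hB (fun ω => (le_abs_self _).trans (hBC ω)) hl hBl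
  have hdown := h.ae_comp_le hX hB.neg (fun ω => (neg_le_abs _).trans (hBC ω)) hl.neg
    (by simpa only [Pi.neg_apply, neg_mul] using hBl.neg)
  filter_upwards [hup, hdown] with ω hup hdown
  exact abs_le.2 ⟨by simp only [Pi.neg_apply] at hdown; linarith, hup⟩

theorem integrable_comp (hX : Measurable X) (h : IsPropensity P X W w) {B : Ω → ℝ}
    (hB : Integrable B P) {C : ℝ} (hBC : ∀ ω, |B ω| ≤ C) {l : S → ℝ} (hl : Measurable l)
    (hBl : SameCondExp P X (fun ω => B ω * W ω) (fun ω => l (X ω) * W ω)) :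
    Integrable (fun ω => l (X ω)) P :=
  .of_bound (hl.comp hX).aestronglyMeasurable C (h.ae_abs_comp_le hX hB hBC hl hBl)

theorem integral_comp_eq (hX : Measurable X) (h : IsPropensity P X W w) {ε : ℝ} (hε : 0 < ε)
    (hεw : ∀ x, ε ≤ w x) {B : Ω → ℝ} (hB : Integrable B P) {C : ℝ} (hBC : ∀ ω, |B ω| ≤ C)
    {l : S → ℝ} (hl : Measurable l)
    (hBl : SameCondExp P X (fun ω => B ω * W ω) (fun ω => l (X ω) * W ω))
    (hBW : SameCondExp P X (fun ω => W ω * B ω) (fun ω => w (X ω) * B ω)) :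
    ∫ ω, l (X ω) ∂P = ∫ ω, B ω ∂P := by
  -- The clamp `l'` equals `l` a.s. and, unlike `l`, is a bounded test function.
  set l' : S → ℝ := fun x => max (-|C|) (min (l x) |C|)
  have hl' : ∀ᵐ ω ∂P, l' (X ω) = l (X ω) := by
    filter_upwards [h.ae_abs_comp_le hX hB hBC hl hBl] with ω hω
    have hω' := abs_le.1 (hω.trans (le_abs_self C))
    simp only [l', min_eq_left hω'.2, max_eq_right hω'.1]
  have hwinv : ∀ x, |(w x)⁻¹| ≤ ε⁻¹ := fun x => by
    rw [abs_inv, abs_of_pos (h.pos x)]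
    exact inv_anti₀ hε (hεw x)
  have hl'w : ∀ x, |l' x * (w x)⁻¹| ≤ |C| * ε⁻¹ := fun x => by
    rw [abs_mul]
    refine mul_le_mul (abs_le.2 ⟨le_max_left _ _, max_le ?_ (min_le_right _ _)⟩) (hwinv x)
      (abs_nonneg _) (abs_nonneg C)
    linarith [abs_nonneg C]
  have hw : ∀ ω, w (X ω) ≠ 0 := fun ω => (h.pos _).ne'
  calc ∫ ω, l (X ω) ∂P = ∫ ω, w (X ω) * (l' (X ω) * (w (X ω))⁻¹) ∂P := by
        refine integral_congr_ae ?_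
        filter_upwards [hl'] with ω hω
        field_simp [hw ω]
        exact hω.symm
    _ = ∫ ω, W ω * (l' (X ω) * (w (X ω))⁻¹) ∂P :=
        (h.sameCondExp _ (((measurable_const.max (hl.min measurable_const))).mul
          h.measurable.inv) ⟨_, hl'w⟩).symm
    _ = ∫ ω, l (X ω) * W ω * (w (X ω))⁻¹ ∂P := by
        refine integral_congr_ae ?_
        filter_upwards [hl'] with ω hω
        rw [hω]
        ring
    _ = ∫ ω, B ω * W ω * (w (X ω))⁻¹ ∂P := (hBl _ h.measurable.inv ⟨_, hwinv⟩).symm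
    _ = ∫ ω, W ω * B ω * (w (X ω))⁻¹ ∂P := by simp only [mul_comm (B _)]
    _ = ∫ ω, w (X ω) * B ω * (w (X ω))⁻¹ ∂P := hBW _ h.measurable.inv ⟨_, hwinv⟩
    _ = ∫ ω, B ω ∂P := by
        congr 1
        ext ω
        field_simp [hw ω]

theorem integral_comp_eq_of_unconfounded {E : Type*} [MeasurableSpace E] (hX : Measurable X)
    (h : IsPropensity P X W w) {ε : ℝ} (hε : 0 < ε) (hεw : ∀ x, ε ≤ w x) {V : Ω → E}
    (hV : Measurable V) (hU : Unconfounded P X W w V) {φ : E → ℝ} (hφ : Measurable φ) {C : ℝ}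
    (hφC : ∀ ω, |φ (V ω)| ≤ C) {T : Ω → ℝ} (hT : ∀ ω, T ω * W ω = φ (V ω) * W ω)
    {l : S → ℝ} (hl : Measurable l)
    (hTl : SameCondExp P X (fun ω => T ω * W ω) (fun ω => l (X ω) * W ω)) :
    Integrable (fun ω => l (X ω)) P ∧ ∫ ω, l (X ω) ∂P = ∫ ω, φ (V ω) ∂P := by
  have hB : Integrable (fun ω => φ (V ω)) P := integrable_of_abs_le (hφ.comp hV) hφC
  have hBl : SameCondExp P X (fun ω => φ (V ω) * W ω) (fun ω => l (X ω) * W ω) := by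
    simpa only [hT] using hTl
  -- `φ` agrees on the range of `V` with the bounded clamp `ψ`, to which `hU` applies.
  set ψ : E → ℝ := fun v => max (-|C|) (min (φ v) |C|)
  have hψ : ∀ ω, ψ (V ω) = φ (V ω) := fun ω => by
    have hω := abs_le.1 ((hφC ω).trans (le_abs_self C))
    simp only [ψ, min_eq_left hω.2, max_eq_right hω.1]
  have hBW := hU ψ (measurable_const.max (hφ.min measurable_const)) ⟨|C|, fun v =>
    abs_le.2 ⟨le_max_left _ _, max_le (by linarith [abs_nonneg C]) (min_le_right _ _)⟩⟩
  simp only [hψ] at hBW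
  exact ⟨h.integrable_comp hX hB hφC hl hBl, h.integral_comp_eq hX hε hεw hB hφC hl hBl hBW⟩

theorem integral_comp_sub_eq_of_unconfounded {E : Type*} [MeasurableSpace E]
    (hX : Measurable X) {Z : Ω → ℝ} {e : S → ℝ} (h : IsPropensity P X Z e)
    (hZ : ∀ ω, Z ω = 0 ∨ Z ω = 1) {ε : ℝ} (hε : 0 < ε) (he : ∀ x, ε ≤ e x ∧ e x ≤ 1 - ε)
    {V : Ω → E} (hV : Measurable V) (hU : Unconfounded P X Z e V) {φ₀ φ₁ : E → ℝ}
    (hφ₀ : Measurable φ₀) (hφ₁ : Measurable φ₁) {C : ℝ} (hφ₀C : ∀ ω, |φ₀ (V ω)| ≤ C)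
    (hφ₁C : ∀ ω, |φ₁ (V ω)| ≤ C) {T : Ω → ℝ}
    (hT : ∀ ω, T ω = (1 - Z ω) * φ₀ (V ω) + Z ω * φ₁ (V ω)) {k₀ k₁ : S → ℝ}
    (hk₀ : Measurable k₀) (hk₁ : Measurable k₁)
    (hTk₀ : SameCondExp P X (fun ω => T ω * (1 - Z ω)) (fun ω => k₀ (X ω) * (1 - Z ω)))
    (hTk₁ : SameCondExp P X (fun ω => T ω * Z ω) (fun ω => k₁ (X ω) * Z ω)) :
    ∫ ω, k₁ (X ω) - k₀ (X ω) ∂P = ∫ ω, φ₁ (V ω) - φ₀ (V ω) ∂P := by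
  obtain ⟨hk₁i, hk₁X⟩ := h.integral_comp_eq_of_unconfounded hX hε (fun x => (he x).1) hV hU
    hφ₁ hφ₁C (fun ω => by rcases hZ ω with hz | hz <;> simp [hT, hz]) hk₁ hTk₁
  have hε₀ : ∀ x, ε ≤ 1 - e x := fun x => by linarith [he x]
  have h₀ := h.one_sub hX fun x => hε.trans_le (hε₀ x)
  obtain ⟨hk₀i, hk₀X⟩ := h₀.integral_comp_eq_of_unconfounded hX hε hε₀ hV
    (h.unconfounded_one_sub hX hV hU) hφ₀ hφ₀C
    (fun ω => by rcases hZ ω with hz | hz <;> simp [hT, hz]) hk₀ hTk₀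
  rw [integral_sub hk₁i hk₀i, hk₁X, hk₀X]
  exact (integral_sub (integrable_of_abs_le (hφ₁.comp hV) hφ₁C)
    (integrable_of_abs_le (hφ₀.comp hV) hφ₀C)).symm

end IsPropensity

theorem integral_sub_mul_eq_setIntegral_sub {A₀ A₁ : Ω → ℝ} (hA₀ : Measurable A₀)
    (hA₁ : Measurable A₁) (h₀ : ∀ ω, A₀ ω = 0 ∨ A₀ ω = 1) (h₁ : ∀ ω, A₁ ω = 0 ∨ A₁ ω = 1)
    {f : Ω → ℝ} (hf : Integrable f P) :
    ∫ ω, (A₁ ω - A₀ ω) * f ω ∂P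
      = ∫ ω in {ω | A₁ ω = 1 ∧ A₀ ω = 0}, f ω ∂P - ∫ ω in {ω | A₁ ω = 0 ∧ A₀ ω = 1}, f ω ∂P := by
  have hC : MeasurableSet {ω | A₁ ω = 1 ∧ A₀ ω = 0} :=
    (hA₁ (measurableSet_singleton 1)).inter (hA₀ (measurableSet_singleton 0))
  have hD : MeasurableSet {ω | A₁ ω = 0 ∧ A₀ ω = 1} :=
    (hA₁ (measurableSet_singleton 0)).inter (hA₀ (measurableSet_singleton 1))
  rw [← integral_indicator hC, ← integral_indicator hD,
    ← integral_sub (hf.indicator hC) (hf.indicator hD)]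
  congr 1
  ext ω
  rcases h₀ ω with h0 | h0 <;> rcases h₁ ω with h1 | h1 <;> simp [h0, h1]

end

theorem stmt_16_general
    {Ω : Type*} [MeasurableSpace Ω] (P : Measure Ω) [IsProbabilityMeasure P]
    {S : Type*} [mS : MeasurableSpace S]
    (X : Ω → S) (hX : Measurable X)
    (Z A0 A1 Y0 Y1 : Ω → ℝ)
    (hZ : Measurable Z) (hA0 : Measurable A0) (hA1 : Measurable A1)
    (hY0 : Measurable Y0) (hY1 : Measurable Y1)
    (hZ01 : ∀ ω, Z ω = 0 ∨ Z ω = 1)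
    (hA0_01 : ∀ ω, A0 ω = 0 ∨ A0 ω = 1)
    (hA1_01 : ∀ ω, A1 ω = 0 ∨ A1 ω = 1)
    (hY0b : ∃ C, ∀ ω, |Y0 ω| ≤ C) (hY1b : ∃ C, ∀ ω, |Y1 ω| ≤ C)
    (A Y : Ω → ℝ)
    (hA : A = fun ω => (1 - Z ω) * A0 ω + Z ω * A1 ω)
    (hY : Y = fun ω => (1 - A ω) * Y0 ω + A ω * Y1 ω)
    (e : S → ℝ) (he : Measurable e) (ε : ℝ) (hε : 0 < ε)
    (hebd : ∀ x, ε ≤ e x ∧ e x ≤ 1 - ε)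
    (hVe : ∀ g : S → ℝ, Measurable g → (∃ C, ∀ x, |g x| ≤ C) →
      ∫ ω, Z ω * g (X ω) ∂P = ∫ ω, e (X ω) * g (X ω) ∂P)
    (hUnconf : ∀ ψ : ℝ × ℝ × ℝ × ℝ → ℝ, Measurable ψ → (∃ C, ∀ v, |ψ v| ≤ C) →
      ∀ g : S → ℝ, Measurable g → (∃ C, ∀ x, |g x| ≤ C) →
      ∫ ω, Z ω * ψ (A0 ω, A1 ω, Y0 ω, Y1 ω) * g (X ω) ∂P
        = ∫ ω, e (X ω) * ψ (A0 ω, A1 ω, Y0 ω, Y1 ω) * g (X ω) ∂P)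
    (m0 m1 l0 l1 : S → ℝ)
    (hm0 : Measurable m0) (hm1 : Measurable m1)
    (hl0 : Measurable l0) (hl1 : Measurable l1)
    (hm0v : ∀ g : S → ℝ, Measurable g → (∃ C, ∀ x, |g x| ≤ C) →
      ∫ ω, Y ω * (if Z ω = 0 then (1:ℝ) else 0) * g (X ω) ∂P
        = ∫ ω, m0 (X ω) * (if Z ω = 0 then (1:ℝ) else 0) * g (X ω) ∂P)
    (hm1v : ∀ g : S → ℝ, Measurable g → (∃ C, ∀ x, |g x| ≤ C) →
      ∫ ω, Y ω * (if Z ω = 1 then (1:ℝ) else 0) * g (X ω) ∂P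
        = ∫ ω, m1 (X ω) * (if Z ω = 1 then (1:ℝ) else 0) * g (X ω) ∂P)
    (hl0v : ∀ g : S → ℝ, Measurable g → (∃ C, ∀ x, |g x| ≤ C) →
      ∫ ω, A ω * (if Z ω = 0 then (1:ℝ) else 0) * g (X ω) ∂P
        = ∫ ω, l0 (X ω) * (if Z ω = 0 then (1:ℝ) else 0) * g (X ω) ∂P)
    (hl1v : ∀ g : S → ℝ, Measurable g → (∃ C, ∀ x, |g x| ≤ C) →
      ∫ ω, A ω * (if Z ω = 1 then (1:ℝ) else 0) * g (X ω) ∂P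
        = ∫ ω, l1 (X ω) * (if Z ω = 1 then (1:ℝ) else 0) * g (X ω) ∂P)
    -- compliers and defiers both present; Δ0 ≠ 0
    (hC : 0 < P {ω | A1 ω = 1 ∧ A0 ω = 0})
    (hD : 0 < P {ω | A1 ω = 0 ∧ A0 ω = 1})
    (Γ0 Δ0 χ0 δ1 δ2 : ℝ)
    (hΓ0 : Γ0 = ∫ ω, m1 (X ω) - m0 (X ω) ∂P)
    (hΔ0 : Δ0 = ∫ ω, l1 (X ω) - l0 (X ω) ∂P)
    (hΔ0ne : Δ0 ≠ 0)
    (hχ0 : χ0 = Γ0 / Δ0)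
    (hδ1 : δ1 = (P {ω | A1 ω = 0 ∧ A0 ω = 1}).toReal)
    (hδ2 : δ2 = (∫ ω in {ω | A1 ω = 0 ∧ A0 ω = 1}, (Y1 ω - Y0 ω) ∂P)
            / (P {ω | A1 ω = 0 ∧ A0 ω = 1}).toReal
          - (∫ ω in {ω | A1 ω = 1 ∧ A0 ω = 0}, (Y1 ω - Y0 ω) ∂P)
            / (P {ω | A1 ω = 1 ∧ A0 ω = 0}).toReal) :
    (∫ ω in {ω | A1 ω = 1 ∧ A0 ω = 0}, (Y1 ω - Y0 ω) ∂P)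
        / (P {ω | A1 ω = 1 ∧ A0 ω = 0}).toReal
      = χ0 + δ1 * δ2 / Δ0 := by
  obtain ⟨C₀, hC₀⟩ := hY0b
  obtain ⟨C₁, hC₁⟩ := hY1b
  subst hY hA
  have hZ1 : ∀ ω, (if Z ω = 1 then (1 : ℝ) else 0) = Z ω := fun ω => by
    rcases hZ01 ω with h | h <;> simp [h]
  have hZ0 : ∀ ω, (if Z ω = 0 then (1 : ℝ) else 0) = 1 - Z ω := fun ω => by
    rcases hZ01 ω with h | h <;> simp [h]
  simp only [hZ1, hZ0] at hm0v hm1v hl0v hl1v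
  have hprop : IsPropensity P X Z e :=
    ⟨hZ, fun ω => by rcases hZ01 ω with h | h <;> simp [h],
      fun ω => by rcases hZ01 ω with h | h <;> simp [h], he,
      fun x => hε.trans_le (hebd x).1, fun x => by linarith [hebd x], hVe⟩
  have hΔ : Δ0 = (P {ω | A1 ω = 1 ∧ A0 ω = 0}).toReal
      - (P {ω | A1 ω = 0 ∧ A0 ω = 1}).toReal := by
    rw [hΔ0, hprop.integral_comp_sub_eq_of_unconfounded hX hZ01 hε hebd (by fun_prop) hUnconf
      (φ₀ := fun v => v.1) (φ₁ := fun v => v.2.1) (by fun_prop) (by fun_prop)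
      (fun ω => abs_le_one_of_eq_zero_or_eq_one (hA0_01 ω))
      (fun ω => abs_le_one_of_eq_zero_or_eq_one (hA1_01 ω)) (fun ω => rfl) hl0 hl1 hl0v hl1v]
    simpa [measureReal_def] using
      integral_sub_mul_eq_setIntegral_sub hA0 hA1 hA0_01 hA1_01 (integrable_const (1 : ℝ))
  have hΓ : Γ0 = (∫ ω in {ω | A1 ω = 1 ∧ A0 ω = 0}, (Y1 ω - Y0 ω) ∂P)
      - ∫ ω in {ω | A1 ω = 0 ∧ A0 ω = 1}, (Y1 ω - Y0 ω) ∂P := by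
    rw [hΓ0, hprop.integral_comp_sub_eq_of_unconfounded hX hZ01 hε hebd (by fun_prop) hUnconf
      (φ₀ := fun v => (1 - v.1) * v.2.2.1 + v.1 * v.2.2.2)
      (φ₁ := fun v => (1 - v.2.1) * v.2.2.1 + v.2.1 * v.2.2.2) (by fun_prop) (by fun_prop)
      (fun ω => (abs_one_sub_mul_add_mul_le (hA0_01 ω) _ _).trans (add_le_add (hC₀ ω) (hC₁ ω)))
      (fun ω => (abs_one_sub_mul_add_mul_le (hA1_01 ω) _ _).trans (add_le_add (hC₀ ω) (hC₁ ω)))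
      (fun ω => by rcases hZ01 ω with h | h <;> simp [h]) hm0 hm1 hm0v hm1v,
      ← integral_sub_mul_eq_setIntegral_sub hA0 hA1 hA0_01 hA1_01 (f := fun ω => Y1 ω - Y0 ω)
        ((integrable_of_abs_le hY1 hC₁).sub (integrable_of_abs_le hY0 hC₀))]
    congr 1
    ext ω
    ring
  rw [hχ0, hδ1, hδ2, hΓ, hΔ]
  exact div_eq_div_sub_add_mul_div_sub (ENNReal.toReal_pos hC.ne' (measure_ne_top P _)).ne'
    (ENNReal.toReal_pos hD.ne' (measure_ne_top P _)).ne' (hΔ ▸ hΔ0ne)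

/-- sensitivity decomposition under violation of monotonicity: without
monotonicity, with δ1 := P(A1 < A0) and
δ2 := E[Y1 − Y0 | A1 < A0] − E[Y1 − Y0 | A1 > A0],
E[Y1 − Y0 | A1 > A0] = χ0 + δ1·δ2/Δ0 where χ0 := Γ0/Δ0. -/
theorem stmt_16
    {Ω : Type*} [MeasurableSpace Ω] (P : Measure Ω) [IsProbabilityMeasure P]
    {S : Type*} [mS : MeasurableSpace S]
    (X : Ω → S) (hX : Measurable X)
    (Z A0 A1 Y0 Y1 : Ω → ℝ)
    (hZ : Measurable Z) (hA0 : Measurable A0) (hA1 : Measurable A1)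
    (hY0 : Measurable Y0) (hY1 : Measurable Y1)
    (hZ01 : ∀ ω, Z ω = 0 ∨ Z ω = 1)
    (hA0_01 : ∀ ω, A0 ω = 0 ∨ A0 ω = 1)
    (hA1_01 : ∀ ω, A1 ω = 0 ∨ A1 ω = 1)
    (hY0b : ∃ C, ∀ ω, |Y0 ω| ≤ C) (hY1b : ∃ C, ∀ ω, |Y1 ω| ≤ C)
    (A Y : Ω → ℝ)
    (hA : A = fun ω => (1 - Z ω) * A0 ω + Z ω * A1 ω)
    (hY : Y = fun ω => (1 - A ω) * Y0 ω + A ω * Y1 ω)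
    (e : S → ℝ) (he : Measurable e) (ε : ℝ) (hε : 0 < ε) (hε2 : ε < 1/2)
    (hebd : ∀ x, ε ≤ e x ∧ e x ≤ 1 - ε)
    (hVe : ∀ g : S → ℝ, Measurable g → (∃ C, ∀ x, |g x| ≤ C) →
      ∫ ω, Z ω * g (X ω) ∂P = ∫ ω, e (X ω) * g (X ω) ∂P)
    (hUnconf : ∀ ψ : ℝ × ℝ × ℝ × ℝ → ℝ, Measurable ψ → (∃ C, ∀ v, |ψ v| ≤ C) →
      ∀ g : S → ℝ, Measurable g → (∃ C, ∀ x, |g x| ≤ C) →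
      ∫ ω, Z ω * ψ (A0 ω, A1 ω, Y0 ω, Y1 ω) * g (X ω) ∂P
        = ∫ ω, e (X ω) * ψ (A0 ω, A1 ω, Y0 ω, Y1 ω) * g (X ω) ∂P)
    (m0 m1 l0 l1 : S → ℝ)
    (hm0 : Measurable m0) (hm1 : Measurable m1)
    (hl0 : Measurable l0) (hl1 : Measurable l1)
    (hm0v : ∀ g : S → ℝ, Measurable g → (∃ C, ∀ x, |g x| ≤ C) →
      ∫ ω, Y ω * (if Z ω = 0 then (1:ℝ) else 0) * g (X ω) ∂P
        = ∫ ω, m0 (X ω) * (if Z ω = 0 then (1:ℝ) else 0) * g (X ω) ∂P)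
    (hm1v : ∀ g : S → ℝ, Measurable g → (∃ C, ∀ x, |g x| ≤ C) →
      ∫ ω, Y ω * (if Z ω = 1 then (1:ℝ) else 0) * g (X ω) ∂P
        = ∫ ω, m1 (X ω) * (if Z ω = 1 then (1:ℝ) else 0) * g (X ω) ∂P)
    (hl0v : ∀ g : S → ℝ, Measurable g → (∃ C, ∀ x, |g x| ≤ C) →
      ∫ ω, A ω * (if Z ω = 0 then (1:ℝ) else 0) * g (X ω) ∂P
        = ∫ ω, l0 (X ω) * (if Z ω = 0 then (1:ℝ) else 0) * g (X ω) ∂P)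
    (hl1v : ∀ g : S → ℝ, Measurable g → (∃ C, ∀ x, |g x| ≤ C) →
      ∫ ω, A ω * (if Z ω = 1 then (1:ℝ) else 0) * g (X ω) ∂P
        = ∫ ω, l1 (X ω) * (if Z ω = 1 then (1:ℝ) else 0) * g (X ω) ∂P)
    -- compliers and defiers both present; Δ0 ≠ 0
    (hC : 0 < P {ω | A1 ω = 1 ∧ A0 ω = 0})
    (hD : 0 < P {ω | A1 ω = 0 ∧ A0 ω = 1})
    (Γ0 Δ0 χ0 δ1 δ2 : ℝ)
    (hΓ0 : Γ0 = ∫ ω, m1 (X ω) - m0 (X ω) ∂P)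
    (hΔ0 : Δ0 = ∫ ω, l1 (X ω) - l0 (X ω) ∂P)
    (hΔ0ne : Δ0 ≠ 0)
    (hχ0 : χ0 = Γ0 / Δ0)
    (hδ1 : δ1 = (P {ω | A1 ω = 0 ∧ A0 ω = 1}).toReal)
    (hδ2 : δ2 = (∫ ω in {ω | A1 ω = 0 ∧ A0 ω = 1}, (Y1 ω - Y0 ω) ∂P)
            / (P {ω | A1 ω = 0 ∧ A0 ω = 1}).toReal
          - (∫ ω in {ω | A1 ω = 1 ∧ A0 ω = 0}, (Y1 ω - Y0 ω) ∂P)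
            / (P {ω | A1 ω = 1 ∧ A0 ω = 0}).toReal) :
    (∫ ω in {ω | A1 ω = 1 ∧ A0 ω = 0}, (Y1 ω - Y0 ω) ∂P)
        / (P {ω | A1 ω = 1 ∧ A0 ω = 0}).toReal
      = χ0 + δ1 * δ2 / Δ0 :=
  stmt_16_general P (mS := mS) X hX Z A0 A1 Y0 Y1 hZ hA0 hA1 hY0 hY1 hZ01 hA0_01 hA1_01 hY0b hY1b A
    Y hA hY e he ε hε hebd hVe hUnconf m0 m1 l0 l1 hm0 hm1 hl0 hl1 hm0v hm1v hl0v hl1v hC hD Γ0 Δ0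
    χ0 δ1 δ2 hΓ0 hΔ0 hΔ0ne hχ0 hδ1 hδ2
end

section
/- (Identification of principal-stratum proportions.) Under unconfoundedness, positivity, and monotonicity: E[ℓ0(X)] = P(A1 = A0 = 1) (the always-taker proportion), E[1 − ℓ1(X)] = P(A1 = A0 = 0) (the never-taker proportion), and E[ℓ1(X) − ℓ0(X)] = P(A1 > A0) (the complier proportion); these three quantities sum to 1. -/
/-!
For each arm `z`, the propensity identity, unconfoundedness and the defining identity of `ℓ_z`
chain together so that the propensity cancels: `E[h(X) ℓ_z(X)] = E[h(X) A_z]` for every bounded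
test function `h` with `ℓ_z h` bounded. The test function `1{ℓ_z ∉ [0,1]} / (ℓ_z - 1/2)` gives
an integrand that is positive where `ℓ_z(X) ∉ [0,1]`, so `ℓ_z(X) ∈ [0,1]` a.s., and then `h = 1`
yields `E[ℓ_z(X)] = E[A_z]`. Under monotonicity `A_0`, `1 - A_1` and `A_1 - A_0` are a.s. the
indicators of the always-takers, never-takers and compliers.
-/

open MeasureTheory Set

lemma exists_abs_mul_le {α : Type*} {u v : α → ℝ} (hu : ∃ C, ∀ a, |u a| ≤ C)
    (hv : ∃ C, ∀ a, |v a| ≤ C) : ∃ C, ∀ a, |u a * v a| ≤ C := by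
  obtain ⟨C, hC⟩ := hu
  obtain ⟨D, hD⟩ := hv
  exact ⟨C * D, fun a => abs_mul (u a) (v a) ▸
    mul_le_mul (hC a) (hD a) (abs_nonneg _) ((abs_nonneg _).trans (hC a))⟩

lemma abs_inv_le_of_le {α : Type*} {f : α → ℝ} {ε : ℝ} (hε : 0 < ε) (hf : ∀ a, ε ≤ f a) (a : α) :
    |(f a)⁻¹| ≤ ε⁻¹ := by
  rw [abs_inv, abs_of_pos (hε.trans_le (hf a))]
  exact inv_anti₀ hε (hf a)

lemma integrable_of_abs_le_s17 {Ω : Type*} [MeasurableSpace Ω] {P : Measure Ω} [IsFiniteMeasure P]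
    {F : Ω → ℝ} (hF : Measurable F) (hFb : ∃ C, ∀ ω, |F ω| ≤ C) : Integrable F P := by
  obtain ⟨C, hC⟩ := hFb
  exact .of_bound hF.aestronglyMeasurable C (ae_of_all _ hC)

section WeightedCondExp

variable {Ω S : Type*} [MeasurableSpace Ω] [MeasurableSpace S] {P : Measure Ω} {X : Ω → S}

/-- `f ∘ X` is a version of `E[B | X]` under the weighted measure `Y • P`; for `Y = 1{Z = z}`
this is the paper's `E[B | X, Z = z]`. -/
def IsWeightedCondExp (P : Measure Ω) (X : Ω → S) (Y B : Ω → ℝ) (f : S → ℝ) : Prop :=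
  ∀ g : S → ℝ, Measurable g → (∃ C, ∀ x, |g x| ≤ C) →
    ∫ ω, B ω * Y ω * g (X ω) ∂P = ∫ ω, f (X ω) * Y ω * g (X ω) ∂P

lemma IsWeightedCondExp.one_sub [IsFiniteMeasure P] {Y W : Ω → ℝ} {f : S → ℝ}
    (h : IsWeightedCondExp P X Y W f) (hX : Measurable X)
    (hY : Measurable Y) (hYb : ∃ C, ∀ ω, |Y ω| ≤ C) (hW : Measurable W) (hWb : ∃ C, ∀ ω, |W ω| ≤ C)
    (hf : Measurable f) (hfb : ∃ C, ∀ x, |f x| ≤ C) :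
    IsWeightedCondExp P X Y (fun ω => 1 - W ω) (fun x => 1 - f x) := by
  intro g hg hgb
  have hgXb : ∃ C, ∀ ω, |g (X ω)| ≤ C := let ⟨C, hC⟩ := hgb; ⟨C, fun ω => hC (X ω)⟩
  have hYg := exists_abs_mul_le hYb hgXb
  have hint : Integrable (fun ω => Y ω * g (X ω)) P :=
    integrable_of_abs_le_s17 (hY.mul (hg.comp hX)) hYg
  have hintW : Integrable (fun ω => W ω * (Y ω * g (X ω))) P :=
    integrable_of_abs_le_s17 (hW.mul (hY.mul (hg.comp hX))) (exists_abs_mul_le hWb hYg)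
  have hintf : Integrable (fun ω => f (X ω) * (Y ω * g (X ω))) P :=
    integrable_of_abs_le_s17 ((hf.comp hX).mul (hY.mul (hg.comp hX)))
      (exists_abs_mul_le (let ⟨C, hC⟩ := hfb; ⟨C, fun ω => hC (X ω)⟩) hYg)
  simp only [sub_mul, one_mul, mul_assoc]
  rw [integral_sub hint hintW, integral_sub hint hintf]
  simpa only [mul_assoc] using congrArg (_ - ·) (h g hg hgb)

/-- The propensity `f` cancels along the chain, so no integrability of `l ∘ X` is needed. -/
lemma integral_comp_mul_eq_of_isWeightedCondExp {W B : Ω → ℝ} {f l h : S → ℝ} {ε : ℝ}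
    (hV : IsWeightedCondExp P X (fun _ => 1) W f) (hU : IsWeightedCondExp P X B W f)
    (hlv : IsWeightedCondExp P X W B l) (hf : Measurable f) (hε : 0 < ε) (hfε : ∀ x, ε ≤ f x)
    (hl : Measurable l) (hh : Measurable h) (hhb : ∃ C, ∀ x, |h x| ≤ C)
    (hlh : ∃ C, ∀ x, |l x * h x| ≤ C) :
    ∫ ω, h (X ω) * l (X ω) ∂P = ∫ ω, h (X ω) * B ω ∂P := by
  have hfne : ∀ x, f x ≠ 0 := fun x => (hε.trans_le (hfε x)).ne'
  have hfinv : ∃ C, ∀ x, |(f x)⁻¹| ≤ C := ⟨ε⁻¹, abs_inv_le_of_le hε hfε⟩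
  calc ∫ ω, h (X ω) * l (X ω) ∂P
      = ∫ ω, f (X ω) * 1 * (l (X ω) * h (X ω) * (f (X ω))⁻¹) ∂P := by
        congr 1; ext ω; field_simp [hfne]
    _ = ∫ ω, W ω * 1 * (l (X ω) * h (X ω) * (f (X ω))⁻¹) ∂P :=
        (hV _ ((hl.mul hh).mul hf.inv) (exists_abs_mul_le hlh hfinv)).symm
    _ = ∫ ω, l (X ω) * W ω * (h (X ω) * (f (X ω))⁻¹) ∂P := by congr 1; ext ω; ring
    _ = ∫ ω, B ω * W ω * (h (X ω) * (f (X ω))⁻¹) ∂P :=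
        (hlv _ (hh.mul hf.inv) (exists_abs_mul_le hhb hfinv)).symm
    _ = ∫ ω, W ω * B ω * (h (X ω) * (f (X ω))⁻¹) ∂P := by congr 1; ext ω; ring
    _ = ∫ ω, f (X ω) * B ω * (h (X ω) * (f (X ω))⁻¹) ∂P :=
        hU _ (hh.mul hf.inv) (exists_abs_mul_le hhb hfinv)
    _ = ∫ ω, h (X ω) * B ω ∂P := by congr 1; ext ω; field_simp [hfne]

end WeightedCondExp

lemma half_lt_abs_sub_half {x : ℝ} (hx : x ∉ Icc (0 : ℝ) 1) : 1 / 2 < |x - 1 / 2| := by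
  rw [mem_Icc, not_and_or, not_le, not_le] at hx
  rcases hx with hx | hx
  · rw [abs_of_neg (by linarith)]; linarith
  · rw [abs_of_pos (by linarith)]; linarith

lemma abs_inv_sub_half_le {x : ℝ} (hx : x ∉ Icc (0 : ℝ) 1) : |(x - 1 / 2)⁻¹| ≤ 2 := by
  rw [abs_inv]
  exact inv_le_of_inv_le₀ (by norm_num) (by linarith [half_lt_abs_sub_half hx])

lemma abs_mul_inv_sub_half_le {x : ℝ} (hx : x ∉ Icc (0 : ℝ) 1) : |x * (x - 1 / 2)⁻¹| ≤ 2 := by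
  have hne : x - 1 / 2 ≠ 0 := abs_pos.1 (by linarith [half_lt_abs_sub_half hx])
  have hsplit : x * (x - 1 / 2)⁻¹ = 1 + 1 / 2 * (x - 1 / 2)⁻¹ :=
    calc x * (x - 1 / 2)⁻¹ = ((x - 1 / 2) + 1 / 2) * (x - 1 / 2)⁻¹ := by ring
      _ = 1 + 1 / 2 * (x - 1 / 2)⁻¹ := by rw [add_mul, mul_inv_cancel₀ hne]
  rw [hsplit]
  calc |1 + 1 / 2 * (x - 1 / 2)⁻¹| ≤ |1| + |1 / 2| * |(x - 1 / 2)⁻¹| :=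
        (abs_add_le _ _).trans_eq (by rw [abs_mul])
    _ ≤ 1 + 1 / 2 * 2 := by
        rw [abs_one, abs_of_pos (by norm_num : (0 : ℝ) < 1 / 2)]
        linarith [abs_inv_sub_half_le hx]
    _ = 2 := by norm_num

lemma inv_sub_half_mul_sub_pos {x b : ℝ} (hx : x ∉ Icc (0 : ℝ) 1) (hb : b ∈ Icc (0 : ℝ) 1) :
    0 < (x - 1 / 2)⁻¹ * (x - b) := by
  rw [mem_Icc, not_and_or, not_le, not_le] at hx
  obtain ⟨hb0, hb1⟩ := hb
  rcases hx with hx | hx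
  · exact mul_pos_of_neg_of_neg (inv_lt_zero.2 (by linarith)) (by linarith)
  · exact mul_pos (inv_pos.2 (by linarith)) (by linarith)

section IntegralsAgainstTestFunctions

variable {Ω S : Type*} [MeasurableSpace Ω] [MeasurableSpace S] {P : Measure Ω} {X : Ω → S}
  {B : Ω → ℝ} {l : S → ℝ}

lemma ae_comp_mem_Icc_of_integral_comp_mul_eq [IsFiniteMeasure P] (hX : Measurable X)
    (hB : Measurable B) (hB01 : ∀ ω, B ω ∈ Icc (0 : ℝ) 1) (hl : Measurable l)
    (hint : ∀ h : S → ℝ, Measurable h → (∃ C, ∀ x, |h x| ≤ C) →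
      (∃ C, ∀ x, |l x * h x| ≤ C) → ∫ ω, h (X ω) * l (X ω) ∂P = ∫ ω, h (X ω) * B ω ∂P) :
    ∀ᵐ ω ∂P, l (X ω) ∈ Icc (0 : ℝ) 1 := by
  set t : Set S := {x | l x ∉ Icc (0 : ℝ) 1}
  have ht : MeasurableSet t := (hl measurableSet_Icc).compl
  set h : S → ℝ := t.indicator fun x => (l x - 1 / 2)⁻¹ with h_def
  have hh : Measurable h := (hl.sub_const _).inv.indicator ht
  have hhb : ∀ x, |h x| ≤ 2 := fun x => by
    by_cases hx : x ∈ t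
    · rw [h_def, indicator_of_mem hx]; exact abs_inv_sub_half_le hx
    · rw [h_def, indicator_of_notMem hx]; norm_num
  have hlh : ∀ x, |l x * h x| ≤ 2 := fun x => by
    by_cases hx : x ∈ t
    · rw [h_def, indicator_of_mem hx]; exact abs_mul_inv_sub_half_le hx
    · rw [h_def, indicator_of_notMem hx]; norm_num
  have hpos : ∀ ω, 0 ≤ h (X ω) * l (X ω) - h (X ω) * B ω := fun ω => by
    rw [← mul_sub]
    by_cases hx : X ω ∈ t
    · rw [h_def, indicator_of_mem hx]; exact (inv_sub_half_mul_sub_pos hx (hB01 ω)).le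
    · rw [h_def, indicator_of_notMem hx, zero_mul]
  have hintl : Integrable (fun ω => h (X ω) * l (X ω)) P :=
    integrable_of_abs_le_s17 ((hh.comp hX).mul (hl.comp hX))
      ⟨2, fun ω => mul_comm (l (X ω)) _ ▸ hlh (X ω)⟩
  have hintB : Integrable (fun ω => h (X ω) * B ω) P :=
    integrable_of_abs_le_s17 ((hh.comp hX).mul hB) (exists_abs_mul_le ⟨2, fun ω => hhb (X ω)⟩
      ⟨1, fun ω => abs_le.2 ⟨by linarith [(hB01 ω).1], (hB01 ω).2⟩⟩)
  have hzero : ∫ ω, h (X ω) * l (X ω) - h (X ω) * B ω ∂P = 0 := by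
    rw [integral_sub hintl hintB, hint h hh ⟨2, hhb⟩ ⟨2, hlh⟩, sub_self]
  filter_upwards [(integral_eq_zero_iff_of_nonneg hpos (hintl.sub hintB)).1 hzero] with ω hω
  by_contra hx
  have hω : h (X ω) * (l (X ω) - B ω) = 0 := (mul_sub _ _ _).trans hω
  rw [h_def, indicator_of_mem hx] at hω
  exact (inv_sub_half_mul_sub_pos hx (hB01 ω)).ne' hω

lemma integrable_comp_of_integral_comp_mul_eq [IsFiniteMeasure P] (hX : Measurable X)
    (hB : Measurable B) (hB01 : ∀ ω, B ω ∈ Icc (0 : ℝ) 1) (hl : Measurable l)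
    (hint : ∀ h : S → ℝ, Measurable h → (∃ C, ∀ x, |h x| ≤ C) →
      (∃ C, ∀ x, |l x * h x| ≤ C) → ∫ ω, h (X ω) * l (X ω) ∂P = ∫ ω, h (X ω) * B ω ∂P) :
    Integrable (fun ω => l (X ω)) P :=
  .of_bound (hl.comp hX).aestronglyMeasurable 1
    ((ae_comp_mem_Icc_of_integral_comp_mul_eq hX hB hB01 hl hint).mono fun _ hω =>
      abs_le.2 ⟨by linarith [hω.1], hω.2⟩)

lemma integral_comp_eq_of_integral_comp_mul_eq [IsFiniteMeasure P] (hX : Measurable X)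
    (hB : Measurable B) (hB01 : ∀ ω, B ω ∈ Icc (0 : ℝ) 1) (hl : Measurable l)
    (hint : ∀ h : S → ℝ, Measurable h → (∃ C, ∀ x, |h x| ≤ C) →
      (∃ C, ∀ x, |l x * h x| ≤ C) → ∫ ω, h (X ω) * l (X ω) ∂P = ∫ ω, h (X ω) * B ω ∂P) :
    ∫ ω, l (X ω) ∂P = ∫ ω, B ω ∂P := by
  set s : Set S := {x | l x ∈ Icc (0 : ℝ) 1}
  have hs : MeasurableSet s := hl measurableSet_Icc
  have hae := ae_comp_mem_Icc_of_integral_comp_mul_eq hX hB hB01 hl hint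
  have hhb : ∀ x, |s.indicator 1 x| ≤ (1 : ℝ) := fun x => by
    by_cases hx : x ∈ s <;> simp [hx]
  have hlh : ∀ x, |l x * s.indicator 1 x| ≤ 1 := fun x => by
    by_cases hx : x ∈ s
    · simpa [hx, abs_le] using And.intro (by linarith [hx.1] : -1 ≤ l x) hx.2
    · simp [hx]
  have hone : ∀ᵐ ω ∂P, s.indicator (1 : S → ℝ) (X ω) = 1 :=
    hae.mono fun ω hω => indicator_of_mem (s := s) hω 1
  calc ∫ ω, l (X ω) ∂P = ∫ ω, s.indicator 1 (X ω) * l (X ω) ∂P :=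
        integral_congr_ae (hone.mono fun ω hω => by simp only [hω, one_mul])
    _ = ∫ ω, s.indicator 1 (X ω) * B ω ∂P :=
        hint _ (measurable_const.indicator hs) ⟨1, hhb⟩ ⟨1, hlh⟩
    _ = ∫ ω, B ω ∂P := integral_congr_ae (hone.mono fun ω hω => by simp only [hω, one_mul])

end IntegralsAgainstTestFunctions

section Binary

variable {a : ℝ}

lemma abs_le_one_of_binary (ha : a = 0 ∨ a = 1) : |a| ≤ 1 := by
  rcases ha with rfl | rfl <;> norm_num

lemma mem_Icc_of_binary (ha : a = 0 ∨ a = 1) : a ∈ Icc (0 : ℝ) 1 := by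
  rcases ha with rfl | rfl <;> norm_num

lemma ite_eq_one_of_binary (ha : a = 0 ∨ a = 1) : (if a = 1 then (1 : ℝ) else 0) = a := by
  rcases ha with rfl | rfl <;> norm_num

lemma ite_eq_zero_of_binary (ha : a = 0 ∨ a = 1) : (if a = 0 then (1 : ℝ) else 0) = 1 - a := by
  rcases ha with rfl | rfl <;> norm_num

lemma binary_strata {a₀ a₁ : ℝ} (h₀ : a₀ = 0 ∨ a₀ = 1) (h₁ : a₁ = 0 ∨ a₁ = 1) (hle : a₀ ≤ a₁) :
    a₀ = (if a₁ = 1 ∧ a₀ = 1 then 1 else 0) ∧ 1 - a₁ = (if a₁ = 0 ∧ a₀ = 0 then 1 else 0) ∧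
      a₁ - a₀ = (if a₁ = 1 ∧ a₀ = 0 then 1 else 0) := by
  rcases h₀ with rfl | rfl <;> rcases h₁ with rfl | rfl <;> norm_num at *

end Binary

lemma IsWeightedCondExp.comp_of_binary {Ω S T : Type*} [MeasurableSpace Ω] [MeasurableSpace S]
    [MeasurableSpace T] {P : Measure Ω} {X : Ω → S} {Z : Ω → ℝ} {e : S → ℝ} {V : Ω → T}
    (h : ∀ ψ : T → ℝ, Measurable ψ → (∃ C, ∀ v, |ψ v| ≤ C) →
      IsWeightedCondExp P X (fun ω => ψ (V ω)) Z e)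
    {π : T → ℝ} (hπ : Measurable π) (h01 : ∀ ω, π (V ω) = 0 ∨ π (V ω) = 1) :
    IsWeightedCondExp P X (fun ω => π (V ω)) Z e := by
  intro g hg hgb
  have hψ : Measurable fun v => if π v = 1 then (1 : ℝ) else 0 :=
    Measurable.ite (hπ (measurableSet_singleton 1)) measurable_const measurable_const
  simpa only [ite_eq_one_of_binary (h01 _)] using
    h _ hψ ⟨1, fun v => by split_ifs <;> norm_num⟩ g hg hgb

lemma integral_eq_measureReal_of_ae_eq_ite {Ω : Type*} [MeasurableSpace Ω] {P : Measure Ω}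
    {F : Ω → ℝ} {p : Ω → Prop} [DecidablePred p] (hp : MeasurableSet {ω | p ω})
    (hF : ∀ᵐ ω ∂P, F ω = if p ω then 1 else 0) : ∫ ω, F ω ∂P = P.real {ω | p ω} := by
  rw [← integral_indicator_one hp]
  exact integral_congr_ae (hF.mono fun ω h => h.trans (by simp [indicator_apply]))

lemma integral_comp_eq_of_isWeightedCondExp {Ω S : Type*} [MeasurableSpace Ω] [MeasurableSpace S]
    {P : Measure Ω} [IsFiniteMeasure P] {X : Ω → S} {W B : Ω → ℝ} {f l : S → ℝ} {ε : ℝ}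
    (hV : IsWeightedCondExp P X (fun _ => 1) W f) (hU : IsWeightedCondExp P X B W f)
    (hlv : IsWeightedCondExp P X W B l) (hX : Measurable X) (hB : Measurable B)
    (hB01 : ∀ ω, B ω ∈ Icc (0 : ℝ) 1) (hf : Measurable f) (hε : 0 < ε) (hfε : ∀ x, ε ≤ f x)
    (hl : Measurable l) :
    Integrable (fun ω => l (X ω)) P ∧ ∫ ω, l (X ω) ∂P = ∫ ω, B ω ∂P := by
  have hint := fun (h : S → ℝ) hh hhb hlh =>
    integral_comp_mul_eq_of_isWeightedCondExp (h := h) hV hU hlv hf hε hfε hl hh hhb hlh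
  exact ⟨integrable_comp_of_integral_comp_mul_eq hX hB hB01 hl hint,
    integral_comp_eq_of_integral_comp_mul_eq hX hB hB01 hl hint⟩

lemma integral_eq_measureReal_principal_strata {Ω : Type*} [MeasurableSpace Ω] {P : Measure Ω}
    [IsProbabilityMeasure P] {A₀ A₁ : Ω → ℝ} (hA₀ : Measurable A₀) (hA₁ : Measurable A₁)
    (hA₀01 : ∀ ω, A₀ ω = 0 ∨ A₀ ω = 1) (hA₁01 : ∀ ω, A₁ ω = 0 ∨ A₁ ω = 1)
    (hmono : ∀ᵐ ω ∂P, A₀ ω ≤ A₁ ω) :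
    ∫ ω, A₀ ω ∂P = P.real {ω | A₁ ω = 1 ∧ A₀ ω = 1} ∧
      1 - ∫ ω, A₁ ω ∂P = P.real {ω | A₁ ω = 0 ∧ A₀ ω = 0} ∧
      ∫ ω, A₁ ω ∂P - ∫ ω, A₀ ω ∂P = P.real {ω | A₁ ω = 1 ∧ A₀ ω = 0} := by
  have hstrata := hmono.mono fun ω h => binary_strata (hA₀01 ω) (hA₁01 ω) h
  have hs : ∀ b₁ b₀ : ℝ, MeasurableSet {ω | A₁ ω = b₁ ∧ A₀ ω = b₀} := fun b₁ b₀ =>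
    (hA₁ (measurableSet_singleton b₁)).inter (hA₀ (measurableSet_singleton b₀))
  have hint₀ : Integrable A₀ P :=
    integrable_of_abs_le_s17 hA₀ ⟨1, fun ω => abs_le_one_of_binary (hA₀01 ω)⟩
  have hint₁ : Integrable A₁ P :=
    integrable_of_abs_le_s17 hA₁ ⟨1, fun ω => abs_le_one_of_binary (hA₁01 ω)⟩
  refine ⟨integral_eq_measureReal_of_ae_eq_ite (hs 1 1) (hstrata.mono fun _ h => h.1), ?_, ?_⟩
  · rw [← integral_eq_measureReal_of_ae_eq_ite (hs 0 0) (hstrata.mono fun _ h => h.2.1),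
      integral_sub (integrable_const 1) hint₁, integral_const, probReal_univ, one_smul]
  · rw [← integral_eq_measureReal_of_ae_eq_ite (hs 1 0) (hstrata.mono fun _ h => h.2.2),
      integral_sub hint₁ hint₀]

theorem stmt_17_general
    {Ω : Type*} [MeasurableSpace Ω] (P : Measure Ω) [IsProbabilityMeasure P]
    {S : Type*} [mS : MeasurableSpace S]
    (X : Ω → S) (hX : Measurable X)
    (Z A0 A1 : Ω → ℝ)
    (hZ : Measurable Z) (hA0 : Measurable A0) (hA1 : Measurable A1)
    (hZ01 : ∀ ω, Z ω = 0 ∨ Z ω = 1)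
    (hA0_01 : ∀ ω, A0 ω = 0 ∨ A0 ω = 1)
    (hA1_01 : ∀ ω, A1 ω = 0 ∨ A1 ω = 1)
    (A : Ω → ℝ) (hA : A = fun ω => (1 - Z ω) * A0 ω + Z ω * A1 ω)
    (e : S → ℝ) (he : Measurable e) (ε : ℝ) (hε : 0 < ε)
    (hebd : ∀ x, ε ≤ e x ∧ e x ≤ 1 - ε)
    (hVe : ∀ g : S → ℝ, Measurable g → (∃ C, ∀ x, |g x| ≤ C) →
      ∫ ω, Z ω * g (X ω) ∂P = ∫ ω, e (X ω) * g (X ω) ∂P)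
    (hUnconf : ∀ ψ : ℝ × ℝ → ℝ, Measurable ψ → (∃ C, ∀ v, |ψ v| ≤ C) →
      ∀ g : S → ℝ, Measurable g → (∃ C, ∀ x, |g x| ≤ C) →
      ∫ ω, Z ω * ψ (A0 ω, A1 ω) * g (X ω) ∂P
        = ∫ ω, e (X ω) * ψ (A0 ω, A1 ω) * g (X ω) ∂P)
    (l0 l1 : S → ℝ) (hl0 : Measurable l0) (hl1 : Measurable l1)
    (hl0v : ∀ g : S → ℝ, Measurable g → (∃ C, ∀ x, |g x| ≤ C) →
      ∫ ω, A ω * (if Z ω = 0 then (1:ℝ) else 0) * g (X ω) ∂P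
        = ∫ ω, l0 (X ω) * (if Z ω = 0 then (1:ℝ) else 0) * g (X ω) ∂P)
    (hl1v : ∀ g : S → ℝ, Measurable g → (∃ C, ∀ x, |g x| ≤ C) →
      ∫ ω, A ω * (if Z ω = 1 then (1:ℝ) else 0) * g (X ω) ∂P
        = ∫ ω, l1 (X ω) * (if Z ω = 1 then (1:ℝ) else 0) * g (X ω) ∂P)
    (hMono : P {ω | A0 ω ≤ A1 ω} = 1) :
    (∫ ω, l0 (X ω) ∂P) = (P {ω | A1 ω = 1 ∧ A0 ω = 1}).toReal
    ∧ (∫ ω, (1 - l1 (X ω)) ∂P) = (P {ω | A1 ω = 0 ∧ A0 ω = 0}).toReal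
    ∧ (∫ ω, (l1 (X ω) - l0 (X ω)) ∂P) = (P {ω | A1 ω = 1 ∧ A0 ω = 0}).toReal
    ∧ (P {ω | A1 ω = 1 ∧ A0 ω = 1}).toReal + (P {ω | A1 ω = 0 ∧ A0 ω = 0}).toReal
        + (P {ω | A1 ω = 1 ∧ A0 ω = 0}).toReal = 1 := by
  have hZb : ∃ C, ∀ ω, |Z ω| ≤ C := ⟨1, fun ω => abs_le_one_of_binary (hZ01 ω)⟩
  have heb : ∃ C, ∀ x, |e x| ≤ C :=
    ⟨1, fun x => abs_le.2 ⟨by linarith [(hebd x).1], by linarith [(hebd x).2]⟩⟩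
  have hV1 : IsWeightedCondExp P X (fun _ => 1) Z e := fun g hg hgb => by
    simpa only [mul_one] using hVe g hg hgb
  have hU1 : IsWeightedCondExp P X A1 Z e := .comp_of_binary hUnconf measurable_snd hA1_01
  have hlv1 : IsWeightedCondExp P X Z A1 l1 := fun g hg hgb => by
    have hAZ : ∀ ω, A ω * Z ω = A1 ω * Z ω := fun ω => by
      rcases hZ01 ω with h | h <;> simp [hA, h]
    simpa only [ite_eq_one_of_binary (hZ01 _), hAZ] using hl1v g hg hgb
  have hU0 : IsWeightedCondExp P X A0 Z e := .comp_of_binary hUnconf measurable_fst hA0_01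
  have hlv0 : IsWeightedCondExp P X (fun ω => 1 - Z ω) A0 l0 := fun g hg hgb => by
    have hAZ : ∀ ω, A ω * (1 - Z ω) = A0 ω * (1 - Z ω) := fun ω => by
      rcases hZ01 ω with h | h <;> simp [hA, h]
    simpa only [ite_eq_zero_of_binary (hZ01 _), hAZ] using hl0v g hg hgb
  obtain ⟨hint1, hI1⟩ := integral_comp_eq_of_isWeightedCondExp hV1 hU1 hlv1 hX hA1
    (fun ω => mem_Icc_of_binary (hA1_01 ω)) he hε (fun x => (hebd x).1) hl1
  obtain ⟨hint0, hI0⟩ := integral_comp_eq_of_isWeightedCondExp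
    (hV1.one_sub hX measurable_const ⟨1, fun _ => by norm_num⟩ hZ hZb he heb)
    (hU0.one_sub hX hA0 ⟨1, fun ω => abs_le_one_of_binary (hA0_01 ω)⟩ hZ hZb he heb) hlv0 hX hA0
    (fun ω => mem_Icc_of_binary (hA0_01 ω)) (measurable_const.sub he) hε
    (fun x => by linarith [(hebd x).2]) hl0
  have hmono : ∀ᵐ ω ∂P, A0 ω ≤ A1 ω :=
    (ae_iff_prob_eq_one (measurableSet_setOfPred.1 (measurableSet_le hA0 hA1))).2 hMono
  obtain ⟨h11, h00, h10⟩ :=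
    integral_eq_measureReal_principal_strata hA0 hA1 hA0_01 hA1_01 hmono
  simp only [← measureReal_def]
  refine ⟨hI0.trans h11, ?_, ?_, ?_⟩
  · rw [integral_sub (integrable_const 1) hint1, hI1, ← h00, integral_const, probReal_univ,
      one_smul]
  · rw [integral_sub hint1 hint0, hI1, hI0, h10]
  · rw [← h11, ← h00, ← h10]; ring

/-- identification of principal-stratum proportions: under unconfoundedness,
positivity and monotonicity, E[ℓ0(X)] = P(A1 = A0 = 1), E[1 − ℓ1(X)] = P(A1 = A0 = 0),
E[ℓ1(X) − ℓ0(X)] = P(A1 > A0), and these three proportions sum to 1. -/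
theorem stmt_17
    {Ω : Type*} [MeasurableSpace Ω] (P : Measure Ω) [IsProbabilityMeasure P]
    {S : Type*} [mS : MeasurableSpace S]
    (X : Ω → S) (hX : Measurable X)
    (Z A0 A1 : Ω → ℝ)
    (hZ : Measurable Z) (hA0 : Measurable A0) (hA1 : Measurable A1)
    (hZ01 : ∀ ω, Z ω = 0 ∨ Z ω = 1)
    (hA0_01 : ∀ ω, A0 ω = 0 ∨ A0 ω = 1)
    (hA1_01 : ∀ ω, A1 ω = 0 ∨ A1 ω = 1)
    (A : Ω → ℝ) (hA : A = fun ω => (1 - Z ω) * A0 ω + Z ω * A1 ω)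
    (e : S → ℝ) (he : Measurable e) (ε : ℝ) (hε : 0 < ε) (hε2 : ε < 1/2)
    (hebd : ∀ x, ε ≤ e x ∧ e x ≤ 1 - ε)
    (hVe : ∀ g : S → ℝ, Measurable g → (∃ C, ∀ x, |g x| ≤ C) →
      ∫ ω, Z ω * g (X ω) ∂P = ∫ ω, e (X ω) * g (X ω) ∂P)
    (hUnconf : ∀ ψ : ℝ × ℝ → ℝ, Measurable ψ → (∃ C, ∀ v, |ψ v| ≤ C) →
      ∀ g : S → ℝ, Measurable g → (∃ C, ∀ x, |g x| ≤ C) →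
      ∫ ω, Z ω * ψ (A0 ω, A1 ω) * g (X ω) ∂P
        = ∫ ω, e (X ω) * ψ (A0 ω, A1 ω) * g (X ω) ∂P)
    (l0 l1 : S → ℝ) (hl0 : Measurable l0) (hl1 : Measurable l1)
    (hl0v : ∀ g : S → ℝ, Measurable g → (∃ C, ∀ x, |g x| ≤ C) →
      ∫ ω, A ω * (if Z ω = 0 then (1:ℝ) else 0) * g (X ω) ∂P
        = ∫ ω, l0 (X ω) * (if Z ω = 0 then (1:ℝ) else 0) * g (X ω) ∂P)
    (hl1v : ∀ g : S → ℝ, Measurable g → (∃ C, ∀ x, |g x| ≤ C) →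
      ∫ ω, A ω * (if Z ω = 1 then (1:ℝ) else 0) * g (X ω) ∂P
        = ∫ ω, l1 (X ω) * (if Z ω = 1 then (1:ℝ) else 0) * g (X ω) ∂P)
    (hMono : P {ω | A0 ω ≤ A1 ω} = 1) :
    (∫ ω, l0 (X ω) ∂P) = (P {ω | A1 ω = 1 ∧ A0 ω = 1}).toReal
    ∧ (∫ ω, (1 - l1 (X ω)) ∂P) = (P {ω | A1 ω = 0 ∧ A0 ω = 0}).toReal
    ∧ (∫ ω, (l1 (X ω) - l0 (X ω)) ∂P) = (P {ω | A1 ω = 1 ∧ A0 ω = 0}).toReal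
    ∧ (P {ω | A1 ω = 1 ∧ A0 ω = 1}).toReal + (P {ω | A1 ω = 0 ∧ A0 ω = 0}).toReal
        + (P {ω | A1 ω = 1 ∧ A0 ω = 0}).toReal = 1 :=
  stmt_17_general P (mS := mS) X hX Z A0 A1 hZ hA0 hA1 hZ01 hA0_01 hA1_01 A hA e he ε hε hebd hVe
    hUnconf l0 l1 hl0 hl1 hl0v hl1v hMono
end
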